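/- arXiv:2112.09797 — 3 statements merged into one kernel-verified Lean document; each statement's English description precedes it below -/
import Mathlib

section
/- If X and Y are independent standard normal random variables, then the probability density function of the product Z = XY is p_Z(z) = K_0(|z|)/π for all real z, where K_0 is the modified Bessel function of the second kind of order 0. -/
open MeasureTheory ProbabilityTheory
open scoped NNReal ENNReal

/-- Modified Bessel function of the second kind of order 0, via its integral
representation `K₀(x) = ∫_0^∞ exp (-x * cosh t) dt`. -/
noncomputable def besselK0 (x : ℝ) : ℝ :=
  ∫ t in Set.Ioi (0 : ℝ), Real.exp (-x * Real.cosh t)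

/-!
The law of `X * Y` is the image of the product of the two laws under multiplication, so its
density is `z ↦ ∫ φ(x) φ(z/x) dx/|x| = (1/π) ∫_0^∞ exp(-(x² + z²/x²)/2) dx/x`, `φ` being the
standard Gaussian density. The substitution `x = √|z| e^{t/2}` turns `(x² + z²/x²)/2` into
`|z| cosh t` and `dx/x` into `dt/2`, and the resulting integral over `ℝ` is twice the integral
over `(0, ∞)` that defines `K₀(|z|)`.
-/

open Set Real

theorem lintegral_comp_abs (F : ℝ → ℝ≥0∞) :
    ∫⁻ x, F |x| = 2 * ∫⁻ x in Ioi 0, F x := by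
  have h_pos : ∫⁻ x in Ioi 0, F |x| = ∫⁻ x in Ioi 0, F x :=
    setLIntegral_congr_fun measurableSet_Ioi fun x hx => by rw [abs_of_pos hx]
  have h_neg : ∫⁻ x in Iic 0, F |x| = ∫⁻ x in Ioi 0, F |x| := by
    rw [← (Measure.measurePreserving_neg volume).setLIntegral_comp_preimage_emb
      (Homeomorph.neg ℝ).measurableEmbedding, setLIntegral_congr Ioi_ae_eq_Ici]
    simp
  rw [← setLIntegral_univ, ← Iic_union_Ioi (a := (0 : ℝ)),
    lintegral_union measurableSet_Ioi (Iic_disjoint_Ioi le_rfl), h_neg, h_pos, two_mul]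

theorem lintegral_comp_mul_left (G : ℝ → ℝ≥0∞) {a : ℝ} (ha : a ≠ 0) :
    ∫⁻ y, G (a * y) = ENNReal.ofReal |a⁻¹| * ∫⁻ u, G u := by
  calc ∫⁻ y, G (a * y) = ∫⁻ u, G u ∂(volume.map (a * ·)) :=
        ((Homeomorph.mulLeft₀ a ha).measurableEmbedding.lintegral_map G).symm
    _ = ENNReal.ofReal |a⁻¹| * ∫⁻ u, G u := by
        rw [Real.map_volume_mul_left ha, lintegral_smul_measure, smul_eq_mul]

noncomputable def productDensity (f g : ℝ → ℝ≥0∞) (z : ℝ) : ℝ≥0∞ :=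
  ∫⁻ x, f x * g (z / x) * ENNReal.ofReal |x|⁻¹

section ProductDensity

variable {f g : ℝ → ℝ≥0∞}

theorem measurable_productDensity (hf : Measurable f) (hg : Measurable g) :
    Measurable (productDensity f g) :=
  Measurable.lintegral_prod_right'
    (f := fun p : ℝ × ℝ => f p.2 * g (p.1 / p.2) * ENNReal.ofReal |p.2|⁻¹) (by fun_prop)

theorem map_mul_prod_withDensity (hf : Measurable f) (hg : Measurable g) :
    ((volume.withDensity f).prod (volume.withDensity g)).map (fun p : ℝ × ℝ => p.1 * p.2)
      = volume.withDensity (productDensity f g) := by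
  refine Measure.ext_of_lintegral _ fun φ hφ => ?_
  have h_inner : ∀ x ≠ 0, ∫⁻ y, f x * g y * φ (x * y)
      = ∫⁻ z, f x * g (z / x) * ENNReal.ofReal |x|⁻¹ * φ z := by
    intro x hx
    calc ∫⁻ y, f x * g y * φ (x * y)
        = ∫⁻ y, (fun z => f x * g (z / x) * φ z) (x * y) := by
          simp_rw [mul_div_cancel_left₀ _ hx]
      _ = ENNReal.ofReal |x⁻¹| * ∫⁻ z, f x * g (z / x) * φ z :=
          lintegral_comp_mul_left (fun z => f x * g (z / x) * φ z) hx
      _ = ∫⁻ z, f x * g (z / x) * ENNReal.ofReal |x|⁻¹ * φ z := by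
          rw [← lintegral_const_mul' _ _ ENNReal.ofReal_ne_top, abs_inv]
          congr with z
          ring
  rw [lintegral_map hφ (by fun_prop), prod_withDensity hf hg,
    lintegral_withDensity_eq_lintegral_mul _ (by fun_prop) (by fun_prop),
    lintegral_prod _ (by fun_prop),
    lintegral_withDensity_eq_lintegral_mul _ (measurable_productDensity hf hg) hφ]
  calc ∫⁻ x, ∫⁻ y, f x * g y * φ (x * y)
      = ∫⁻ x, ∫⁻ z, f x * g (z / x) * ENNReal.ofReal |x|⁻¹ * φ z :=
        lintegral_congr_ae <| (Measure.ae_ne volume 0).mono h_inner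
    _ = ∫⁻ z, ∫⁻ x, f x * g (z / x) * ENNReal.ofReal |x|⁻¹ * φ z :=
        lintegral_lintegral_swap (by fun_prop)
    _ = ∫⁻ z, productDensity f g z * φ z :=
        lintegral_congr fun z => lintegral_mul_const _ (by fun_prop)

theorem pdf_mul_ae_eq_productDensity {Ω : Type*} [MeasurableSpace Ω] {μ : Measure Ω}
    [IsFiniteMeasure μ] {X Y : Ω → ℝ} (hX : AEMeasurable X μ) (hY : AEMeasurable Y μ)
    (hf : Measurable f) (hg : Measurable g) (hXlaw : μ.map X = volume.withDensity f)
    (hYlaw : μ.map Y = volume.withDensity g) (hindep : IndepFun X Y μ) :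
    pdf (fun ω => X ω * Y ω) μ volume =ᵐ[volume] productDensity f g := by
  have h_map : μ.map (fun ω => X ω * Y ω) = volume.withDensity (productDensity f g) := by
    rw [← map_mul_prod_withDensity hf hg, ← hXlaw, ← hYlaw,
      ← (indepFun_iff_map_prod_eq_prod_map_map hX hY).1 hindep,
      AEMeasurable.map_map_of_aemeasurable (by fun_prop) (hX.prodMk hY)]
    rfl
  have h_meas := (measurable_productDensity hf hg).aemeasurable (μ := volume)
  have := hasPDF_of_map_eq_withDensity (hX.mul hY) _ h_meas h_map
  exact (pdf.eq_of_map_eq_withDensity' _ h_meas).1 h_map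

end ProductDensity

section BesselIntegrals

variable {c : ℝ}

theorem integrableOn_exp_neg_mul_cosh (hc : 0 < c) :
    IntegrableOn (fun t => exp (-c * cosh t)) (Ioi 0) := by
  refine ((exp_neg_integrableOn_Ioi 0 (half_pos hc)).const_mul (exp (-c / 2))).mono'
    (by fun_prop) (.of_forall fun t => ?_)
  rw [norm_of_nonneg (exp_pos _).le, ← exp_add, exp_le_exp, cosh_eq]
  nlinarith [add_one_le_exp t, exp_pos (-t)]

theorem lintegral_exp_neg_mul_cosh (hc : 0 < c) :
    ∫⁻ t, ENNReal.ofReal (exp (-c * cosh t)) = 2 * ENNReal.ofReal (besselK0 c) := by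
  have h := lintegral_comp_abs fun t => ENNReal.ofReal (exp (-c * cosh t))
  simp only [cosh_abs] at h
  rw [h, besselK0, ofReal_integral_eq_lintegral_ofReal (integrableOn_exp_neg_mul_cosh hc)
    (.of_forall fun t => (exp_pos _).le)]

theorem image_sqrt_mul_exp_half (hc : 0 < c) :
    (fun t => √c * exp (t / 2)) '' univ = Ioi 0 := by
  refine image_univ.trans (Set.ext fun x => ⟨?_, fun hx => ?_⟩)
  · rintro ⟨t, rfl⟩
    exact mul_pos (sqrt_pos.2 hc) (exp_pos _)
  · refine ⟨2 * log (x / √c), ?_⟩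
    change √c * exp (2 * log (x / √c) / 2) = x
    rw [mul_div_cancel_left₀ _ two_ne_zero, exp_log (div_pos hx (sqrt_pos.2 hc)),
      mul_div_cancel₀ _ (sqrt_pos.2 hc).ne']

theorem sq_add_div_sq_sqrt_mul_exp_half (hc : 0 < c) (t : ℝ) :
    (√c * exp (t / 2)) ^ 2 + c ^ 2 / (√c * exp (t / 2)) ^ 2 = 2 * (c * cosh t) := by
  have h_sq : (√c * exp (t / 2)) ^ 2 = c * exp t := by
    rw [mul_pow, sq_sqrt hc.le, ← exp_nat_mul]
    ring_nf
  rw [h_sq, cosh_eq, exp_neg]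
  field_simp

theorem lintegral_Ioi_exp_neg_sq_add_div_sq (hc : 0 < c) :
    ∫⁻ x in Ioi 0, ENNReal.ofReal (exp (-(x ^ 2 + c ^ 2 / x ^ 2) / 2) / x)
      = ENNReal.ofReal (besselK0 c) := by
  have h_deriv : ∀ t ∈ univ, HasDerivWithinAt (fun t => √c * exp (t / 2))
      (√c * exp (t / 2) / 2) univ t := fun t _ => by
    have := (((hasDerivAt_id t).div_const 2).exp.const_mul √c).hasDerivWithinAt (s := univ)
    simpa only [id, mul_one_div, mul_div_assoc] using this
  have h_inj : InjOn (fun t => √c * exp (t / 2)) univ := fun s _ t _ h => by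
    simpa using exp_injective (mul_left_cancel₀ (sqrt_pos.2 hc).ne' h)
  have h_pointwise : ∀ t, ENNReal.ofReal |√c * exp (t / 2) / 2| *
      ENNReal.ofReal (exp (-((√c * exp (t / 2)) ^ 2 + c ^ 2 / (√c * exp (t / 2)) ^ 2) / 2)
        / (√c * exp (t / 2))) = 2⁻¹ * ENNReal.ofReal (exp (-c * cosh t)) := fun t => by
    have hx : 0 < √c * exp (t / 2) := mul_pos (sqrt_pos.2 hc) (exp_pos _)
    rw [sq_add_div_sq_sqrt_mul_exp_half hc, abs_of_pos (half_pos hx),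
      ← ENNReal.ofReal_mul (half_pos hx).le, div_mul_div_comm, mul_comm (√c * _),
      mul_div_mul_right _ _ hx.ne', ENNReal.ofReal_div_of_pos two_pos, ENNReal.ofReal_ofNat,
      ENNReal.div_eq_inv_mul, neg_div, mul_div_cancel_left₀ _ two_ne_zero, neg_mul]
  rw [← image_sqrt_mul_exp_half hc, lintegral_image_eq_lintegral_abs_deriv_mul MeasurableSet.univ
    h_deriv h_inj, setLIntegral_univ, lintegral_congr h_pointwise, lintegral_const_mul',
    lintegral_exp_neg_mul_cosh hc, ← mul_assoc, ENNReal.inv_mul_cancel, one_mul] <;> simp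

end BesselIntegrals

theorem gaussianPDFReal_mul_gaussianPDFReal_div (x z : ℝ) :
    gaussianPDFReal 0 1 x * gaussianPDFReal 0 1 (z / x) * |x|⁻¹
      = (2 * π)⁻¹ * (exp (-(|x| ^ 2 + |z| ^ 2 / |x| ^ 2) / 2) / |x|) := by
  have h_norm : (√(2 * π))⁻¹ * (√(2 * π))⁻¹ = (2 * π)⁻¹ := by
    rw [← mul_inv, mul_self_sqrt (by positivity)]
  simp only [gaussianPDFReal, NNReal.coe_one, mul_one, sub_zero, sq_abs]
  rw [← h_norm, div_pow, neg_add, add_div, exp_add]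
  ring

theorem productDensity_gaussianPDF {z : ℝ} (hz : z ≠ 0) :
    productDensity (gaussianPDF 0 1) (gaussianPDF 0 1) z = ENNReal.ofReal (besselK0 |z| / π) := by
  have h_integrand : ∀ x, gaussianPDF 0 1 x * gaussianPDF 0 1 (z / x) * ENNReal.ofReal |x|⁻¹
      = ENNReal.ofReal (2 * π)⁻¹ *
        ENNReal.ofReal (exp (-(|x| ^ 2 + |z| ^ 2 / |x| ^ 2) / 2) / |x|) := by
    intro x
    simp only [gaussianPDF]
    rw [← ENNReal.ofReal_mul (gaussianPDFReal_nonneg _ _ _), ← ENNReal.ofReal_mul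
      (mul_nonneg (gaussianPDFReal_nonneg _ _ _) (gaussianPDFReal_nonneg _ _ _)),
      gaussianPDFReal_mul_gaussianPDFReal_div, ENNReal.ofReal_mul (by positivity)]
  rw [productDensity, lintegral_congr h_integrand, lintegral_const_mul' _ _ ENNReal.ofReal_ne_top,
    lintegral_comp_abs (fun s => ENNReal.ofReal (exp (-(s ^ 2 + |z| ^ 2 / s ^ 2) / 2) / s)),
    lintegral_Ioi_exp_neg_sq_add_div_sq (abs_pos.2 hz), ← ENNReal.ofReal_ofNat 2,
    ← ENNReal.ofReal_mul zero_le_two, ← ENNReal.ofReal_mul (by positivity)]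
  congr 1
  field_simp

/-- If `X` and `Y` are independent standard normal random variables, then the
probability density function of `Z = X * Y` is `z ↦ K₀(|z|) / π`. -/
theorem product_of_std_normals_pdf
    {Ω : Type*} [MeasureSpace Ω] [IsProbabilityMeasure (ℙ : Measure Ω)]
    (X Y : Ω → ℝ) (hX : Measurable X) (hY : Measurable Y)
    (hXlaw : Measure.map X ℙ = gaussianReal 0 1)
    (hYlaw : Measure.map Y ℙ = gaussianReal 0 1)
    (hindep : IndepFun X Y ℙ) :
    pdf (fun ω => X ω * Y ω) ℙ volume
      =ᵐ[volume] fun z => ENNReal.ofReal (besselK0 |z| / Real.pi) := by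
  have h_gauss : gaussianReal 0 1 = volume.withDensity (gaussianPDF 0 1) :=
    gaussianReal_of_var_ne_zero 0 one_ne_zero
  filter_upwards [pdf_mul_ae_eq_productDensity hX.aemeasurable hY.aemeasurable
    (measurable_gaussianPDF 0 1) (measurable_gaussianPDF 0 1) (hXlaw.trans h_gauss)
    (hYlaw.trans h_gauss) hindep, Measure.ae_ne volume 0] with z hz hz0
  rw [hz, productDensity_gaussianPDF hz0]
end

section
/- If Z1 and Z2 are independent Gaussian random variables with Z1 ~ N(μ1, σ1²), Z2 ~ N(μ2, σ2²), σ1, σ2 > 0, and z0 ∈ ℝ, then the cumulative distribution function of Z = Z1 Z2 + z0 satisfies P(Z ≤ z) = ∫_{-∞}^{∞} (1/σ1) φ((t−μ1)/σ1) Φ((z − z0 − t μ2)/(|t| σ2)) dt, where φ and Φ are the standard normal density and cumulative distribution function. -/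
open MeasureTheory ProbabilityTheory
open scoped NNReal ENNReal

/-- The standard normal probability density function `φ`. -/
noncomputable def stdNormalPdf (u : ℝ) : ℝ :=
  (Real.sqrt (2 * Real.pi))⁻¹ * Real.exp (-u ^ 2 / 2)

/-- The standard normal cumulative distribution function `Φ`. -/
noncomputable def stdNormalCdf (u : ℝ) : ℝ :=
  ∫ s in Set.Iic u, stdNormalPdf s

lemma stdNormalPdf_eq : stdNormalPdf = gaussianPDFReal 0 1 := by
  ext x
  simp [stdNormalPdf, gaussianPDFReal, neg_div]

lemma pdf_scale (m : ℝ) (σ : ℝ≥0) (hσ : 0 < σ) (x : ℝ) :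
    gaussianPDFReal m (σ ^ 2) x = (1 / (σ : ℝ)) * stdNormalPdf ((x - m) / (σ : ℝ)) := by
  have hσ' : (0:ℝ) < σ := hσ
  rw [stdNormalPdf_eq]
  simp only [gaussianPDFReal, NNReal.coe_pow, NNReal.coe_one, sub_zero]
  rw [show (2 * Real.pi * (σ:ℝ)^2) = (2 * Real.pi) * (σ:ℝ)^2 by ring,
    Real.sqrt_mul (by positivity), Real.sqrt_sq hσ'.le, mul_one, mul_one, div_pow]
  rw [mul_inv]
  have : -(x - m) ^ 2 / (2 * (σ:ℝ) ^ 2) = -((x - m) ^ 2 / (σ:ℝ) ^ 2) / 2 := by ring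
  rw [this]
  ring

lemma g01_Iic (a : ℝ) :
    gaussianReal 0 1 (Set.Iic a) = ENNReal.ofReal (stdNormalCdf a) := by
  rw [gaussianReal_apply_eq_integral 0 one_ne_zero, stdNormalCdf, stdNormalPdf_eq]

lemma gauss_eq_map (m : ℝ) (σ : ℝ≥0) :
    gaussianReal m (σ ^ 2) = Measure.map (fun x => (σ:ℝ) * x + m) (gaussianReal 0 1) := by
  have h : (fun x : ℝ => (σ:ℝ) * x + m) = (· + m) ∘ (fun x => (σ:ℝ) * x) := rfl
  rw [h, ← Measure.map_map (measurable_id'.add_const m) (measurable_id'.const_mul _),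
    gaussianReal_map_const_mul, gaussianReal_map_add_const]
  congr 1
  · ring
  · ext; simp

lemma gauss_eq_map_neg (m : ℝ) (σ : ℝ≥0) :
    gaussianReal m (σ ^ 2) = Measure.map (fun x => -(σ:ℝ) * x + m) (gaussianReal 0 1) := by
  have h : (fun x : ℝ => -(σ:ℝ) * x + m) = (· + m) ∘ (fun x => (-(σ:ℝ)) * x) := rfl
  rw [h, ← Measure.map_map (measurable_id'.add_const m) (measurable_id'.const_mul _),
    gaussianReal_map_const_mul, gaussianReal_map_add_const]
  congr 1
  · ring
  · ext; simp

lemma gauss_Iic (m : ℝ) (σ : ℝ≥0) (hσ : 0 < σ) (c : ℝ) :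
    gaussianReal m (σ ^ 2) (Set.Iic c) = ENNReal.ofReal (stdNormalCdf ((c - m) / σ)) := by
  have hσ' : (0:ℝ) < σ := hσ
  rw [gauss_eq_map m σ, Measure.map_apply (by fun_prop) measurableSet_Iic]
  have : (fun x => (σ:ℝ) * x + m) ⁻¹' Set.Iic c = Set.Iic ((c - m) / σ) := by
    ext x
    simp only [Set.mem_preimage, Set.mem_Iic]
    rw [le_div_iff₀ hσ']
    constructor <;> intro h <;> nlinarith
  rw [this, g01_Iic]

lemma gauss_Ici (m : ℝ) (σ : ℝ≥0) (hσ : 0 < σ) (c : ℝ) :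
    gaussianReal m (σ ^ 2) (Set.Ici c) = ENNReal.ofReal (stdNormalCdf ((m - c) / σ)) := by
  have hσ' : (0:ℝ) < σ := hσ
  rw [gauss_eq_map_neg m σ, Measure.map_apply (by fun_prop) measurableSet_Ici]
  have : (fun x => -(σ:ℝ) * x + m) ⁻¹' Set.Ici c = Set.Iic ((m - c) / σ) := by
    ext x
    simp only [Set.mem_preimage, Set.mem_Ici, Set.mem_Iic]
    rw [le_div_iff₀ hσ']
    constructor <;> intro h <;> nlinarith
  rw [this, g01_Iic]

lemma gauss_halfline (m : ℝ) (σ : ℝ≥0) (hσ : 0 < σ) (z z0 t : ℝ) (ht : t ≠ 0) :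
    gaussianReal m (σ ^ 2) {y | t * y + z0 ≤ z}
      = ENNReal.ofReal (stdNormalCdf ((z - z0 - t * m) / (|t| * σ))) := by
  have hσ' : (0:ℝ) < σ := hσ
  rcases ht.lt_or_gt with htn | htp
  · have hset : {y : ℝ | t * y + z0 ≤ z} = Set.Ici ((z - z0) / t) := by
      ext y
      simp only [Set.mem_setOf_eq, Set.mem_Ici]
      rw [div_le_iff_of_neg htn]
      constructor <;> intro h <;> nlinarith
    rw [hset, gauss_Ici m σ hσ]
    congr 1
    rw [abs_of_neg htn]
    field_simp
    ring
  · have hset : {y : ℝ | t * y + z0 ≤ z} = Set.Iic ((z - z0) / t) := by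
      ext y
      simp only [Set.mem_setOf_eq, Set.mem_Iic]
      rw [le_div_iff₀ htp]
      constructor <;> intro h <;> nlinarith
    rw [hset, gauss_Iic m σ hσ]
    congr 1
    rw [abs_of_pos htp]
    field_simp

lemma stdNormalPdf_nonneg (u : ℝ) : 0 ≤ stdNormalPdf u := by
  rw [stdNormalPdf_eq]; exact gaussianPDFReal_nonneg _ _ _

lemma stdNormalCdf_nonneg (u : ℝ) : 0 ≤ stdNormalCdf u :=
  setIntegral_nonneg measurableSet_Iic fun s _ => stdNormalPdf_nonneg s

lemma stdNormalCdf_le_one (u : ℝ) : stdNormalCdf u ≤ 1 := by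
  rw [stdNormalCdf, stdNormalPdf_eq, ← integral_gaussianPDFReal_eq_one 0 one_ne_zero]
  exact setIntegral_le_integral (integrable_gaussianPDFReal 0 1)
    (Filter.Eventually.of_forall fun s => gaussianPDFReal_nonneg 0 1 s)

lemma stdNormalCdf_mono : Monotone stdNormalCdf := by
  intro a b hab
  refine setIntegral_mono_set ((integrable_gaussianPDFReal 0 1).congr ?_).integrableOn
    (Filter.Eventually.of_forall stdNormalPdf_nonneg)
    (Filter.Eventually.of_forall (Set.Iic_subset_Iic.mpr hab))
  exact Filter.Eventually.of_forall fun x => (congrFun stdNormalPdf_eq x).symm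

lemma stdNormalPdf_measurable : Measurable stdNormalPdf := by
  rw [stdNormalPdf_eq]; exact measurable_gaussianPDFReal 0 1

lemma stdNormalCdf_measurable : Measurable stdNormalCdf :=
  stdNormalCdf_mono.measurable


/-- If `Z1 ~ N(μ1, σ1²)` and `Z2 ~ N(μ2, σ2²)` are independent with `σ1, σ2 > 0`
and `z0 ∈ ℝ`, then the cumulative distribution function of `Z = Z1 Z2 + z0` satisfies
`P(Z ≤ z) = ∫ (1/σ1) φ((t−μ1)/σ1) Φ((z−z0−tμ2)/(|t|σ2)) dt`. -/
theorem cdf_product_of_gaussians_plus_const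
    {Ω : Type*} [MeasureSpace Ω] [IsProbabilityMeasure (ℙ : Measure Ω)]
    (Z1 Z2 : Ω → ℝ) (μ1 μ2 : ℝ) (σ1 σ2 : ℝ≥0) (hσ1 : 0 < σ1) (hσ2 : 0 < σ2)
    (z0 : ℝ)
    (hZ1 : Measurable Z1) (hZ2 : Measurable Z2)
    (hlaw1 : Measure.map Z1 ℙ = gaussianReal μ1 (σ1 ^ 2))
    (hlaw2 : Measure.map Z2 ℙ = gaussianReal μ2 (σ2 ^ 2))
    (hindep : IndepFun Z1 Z2 ℙ) (z : ℝ) :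
    ℙ {ω | Z1 ω * Z2 ω + z0 ≤ z}
      = ENNReal.ofReal (∫ t : ℝ, (1 / (σ1 : ℝ)) * stdNormalPdf ((t - μ1) / (σ1 : ℝ)) *
          stdNormalCdf ((z - z0 - t * μ2) / (|t| * (σ2 : ℝ)))) := by
  have hv1 : (σ1 ^ 2 : ℝ≥0) ≠ 0 := by positivity
  have hS : MeasurableSet {p : ℝ × ℝ | p.1 * p.2 + z0 ≤ z} :=
    measurableSet_le (by fun_prop) measurable_const
  have hmap : Measure.map (fun ω => (Z1 ω, Z2 ω)) ℙ
      = (gaussianReal μ1 (σ1 ^ 2)).prod (gaussianReal μ2 (σ2 ^ 2)) := by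
    rw [← hlaw1, ← hlaw2]
    exact (indepFun_iff_map_prod_eq_prod_map_map hZ1.aemeasurable hZ2.aemeasurable).mp hindep
  have h1 : ℙ {ω | Z1 ω * Z2 ω + z0 ≤ z}
      = ((gaussianReal μ1 (σ1 ^ 2)).prod (gaussianReal μ2 (σ2 ^ 2)))
          {p : ℝ × ℝ | p.1 * p.2 + z0 ≤ z} := by
    rw [← hmap, Measure.map_apply (hZ1.prodMk hZ2) hS]
    rfl
  rw [h1, Measure.prod_apply hS,
    gaussianReal_of_var_ne_zero μ1 hv1,
    lintegral_withDensity_eq_lintegral_mul volume (measurable_gaussianPDF _ _)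
      (measurable_measure_prodMk_left hS)]
  have hae : ∀ᵐ t : ℝ, ((gaussianPDF μ1 (σ1 ^ 2) * fun t =>
        gaussianReal μ2 (σ2 ^ 2) (Prod.mk t ⁻¹' {p : ℝ × ℝ | p.1 * p.2 + z0 ≤ z})) t)
      = ENNReal.ofReal ((1 / (σ1 : ℝ)) * stdNormalPdf ((t - μ1) / (σ1 : ℝ)) *
          stdNormalCdf ((z - z0 - t * μ2) / (|t| * (σ2 : ℝ)))) := by
    have h0 : (volume : Measure ℝ) {(0:ℝ)} = 0 := measure_singleton 0
    rw [ae_iff]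
    refine measure_mono_null (fun t ht => ?_) h0
    simp only [Set.mem_setOf_eq, Set.mem_singleton_iff] at ht ⊢
    by_contra htne
    apply ht
    have hpre : Prod.mk t ⁻¹' {p : ℝ × ℝ | p.1 * p.2 + z0 ≤ z} = {y | t * y + z0 ≤ z} := rfl
    simp only [Pi.mul_apply, hpre, gauss_halfline μ2 σ2 hσ2 z z0 t htne,
      gaussianPDF, pdf_scale μ1 σ1 hσ1 t]
    rw [← ENNReal.ofReal_mul
      (by have := stdNormalPdf_nonneg ((t - μ1) / (σ1 : ℝ)); positivity)]
  rw [lintegral_congr_ae hae]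
  have hnn : ∀ t : ℝ, 0 ≤ (1 / (σ1 : ℝ)) * stdNormalPdf ((t - μ1) / (σ1 : ℝ)) *
      stdNormalCdf ((z - z0 - t * μ2) / (|t| * (σ2 : ℝ))) := fun t => by
    have := stdNormalPdf_nonneg ((t - μ1) / (σ1 : ℝ))
    have := stdNormalCdf_nonneg ((z - z0 - t * μ2) / (|t| * (σ2 : ℝ)))
    positivity
  have hmeas : AEStronglyMeasurable (fun t : ℝ => (1 / (σ1 : ℝ)) *
      stdNormalPdf ((t - μ1) / (σ1 : ℝ)) *
      stdNormalCdf ((z - z0 - t * μ2) / (|t| * (σ2 : ℝ)))) volume := by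
    refine Measurable.aestronglyMeasurable (Measurable.mul (Measurable.mul measurable_const
      (stdNormalPdf_measurable.comp (by fun_prop)))
      (stdNormalCdf_measurable.comp (by fun_prop)))
  have hint : Integrable (fun t : ℝ => (1 / (σ1 : ℝ)) * stdNormalPdf ((t - μ1) / (σ1 : ℝ)) *
      stdNormalCdf ((z - z0 - t * μ2) / (|t| * (σ2 : ℝ)))) volume := by
    refine (integrable_gaussianPDFReal μ1 (σ1 ^ 2)).mono hmeas ?_
    refine Filter.Eventually.of_forall fun t => ?_
    have hp := stdNormalPdf_nonneg ((t - μ1) / (σ1 : ℝ))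
    have hc1 := stdNormalCdf_le_one ((z - z0 - t * μ2) / (|t| * (σ2 : ℝ)))
    have hσ1' : (0:ℝ) < σ1 := hσ1
    calc ‖(1 / (σ1 : ℝ)) * stdNormalPdf ((t - μ1) / (σ1 : ℝ)) *
          stdNormalCdf ((z - z0 - t * μ2) / (|t| * (σ2 : ℝ)))‖
        = (1 / (σ1 : ℝ)) * stdNormalPdf ((t - μ1) / (σ1 : ℝ)) *
          stdNormalCdf ((z - z0 - t * μ2) / (|t| * (σ2 : ℝ))) :=
          Real.norm_of_nonneg (hnn t)
      _ ≤ (1 / (σ1 : ℝ)) * stdNormalPdf ((t - μ1) / (σ1 : ℝ)) :=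
          mul_le_of_le_one_right (by positivity) hc1
      _ = gaussianPDFReal μ1 (σ1 ^ 2) t := (pdf_scale μ1 σ1 hσ1 t).symm
      _ ≤ ‖gaussianPDFReal μ1 (σ1 ^ 2) t‖ := le_abs_self _
  rw [← ofReal_integral_eq_lintegral_ofReal hint (Filter.Eventually.of_forall hnn)]
end

section
/- If Z1 and Z2 are independent non-degenerate Gaussian random variables (σ1 > 0 and σ2 > 0), then the product Z1 Z2 is not Gaussian. -/
/-!
A Gaussian law has finite exponential moments `E[exp (s X)]` for every `s`. For the product,
integrating out `Z2` first gives `E[exp (s Z1 Z2)] = E[exp (s μ2 Z1 + s² σ2² Z1² / 2)]`, and for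
`s = 1 / (σ1 σ2)` the factor `exp (Z1² / (2 σ1²))` exactly cancels the Gaussian decay of the density
of `Z1`, leaving the Lebesgue integral of the exponential of an affine function, which diverges.
-/

open MeasureTheory ProbabilityTheory Real
open scoped NNReal ENNReal

theorem not_integrable_exp_mul (c : ℝ) : ¬ Integrable (fun x : ℝ => rexp (c * x)) := by
  intro h
  have hcosh : Integrable (fun x : ℝ => rexp (c * x) + rexp (c * -x)) := h.add h.comp_neg
  have hone : Integrable (fun _ : ℝ => (1 : ℝ)) := by
    refine hcosh.mono' (by fun_prop) (ae_of_all _ fun x => ?_)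
    have h₁ := add_one_le_exp (c * x)
    have h₂ := add_one_le_exp (c * -x)
    rw [norm_one]
    linarith
  have := integrable_const_iff.mp hone |>.resolve_left one_ne_zero
  simpa using measure_lt_top (volume : Measure ℝ) Set.univ

theorem gaussianPDFReal_mul_exp_sq_div_add_mul (μ a : ℝ) {v : ℝ≥0} (hv : v ≠ 0) (x : ℝ) :
    gaussianPDFReal μ v x * rexp (x ^ 2 / (2 * v) + a * x)
      = gaussianPDFReal μ v 0 * rexp ((a + μ / v) * x) := by
  have hv' : (v : ℝ) ≠ 0 := mod_cast hv
  simp only [gaussianPDFReal, mul_assoc, ← Real.exp_add]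
  congr 2
  field_simp
  ring

theorem not_integrable_exp_sq_div_add_mul_gaussianReal (μ a : ℝ) {v : ℝ≥0} (hv : v ≠ 0) :
    ¬ Integrable (fun x => rexp (x ^ 2 / (2 * v) + a * x)) (gaussianReal μ v) := by
  rw [gaussianReal_of_var_ne_zero μ hv,
    integrable_withDensity_iff_integrable_smul' (measurable_gaussianPDF μ v)
      (ae_of_all _ fun _ => gaussianPDF_lt_top)]
  simp only [toReal_gaussianPDF, smul_eq_mul, gaussianPDFReal_mul_exp_sq_div_add_mul μ a hv]
  intro h
  exact not_integrable_exp_mul _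
    ((integrable_const_mul_iff (gaussianPDFReal_pos μ v 0 hv).ne'.isUnit _).mp h)

theorem ProbabilityTheory.IndepFun.integrable_mgf_mul_of_integrable_exp_mul_mul
    {Ω : Type*} [MeasurableSpace Ω] {P : Measure Ω} [IsFiniteMeasure P] {X Y : Ω → ℝ}
    (hX : Measurable X) (hY : Measurable Y) (hindep : IndepFun X Y P) {s : ℝ}
    (h : Integrable (fun ω => rexp (s * (X ω * Y ω))) P) :
    Integrable (fun x => mgf Y P (s * x)) (P.map X) := by
  have hprod : Integrable (fun p : ℝ × ℝ => rexp (s * (p.1 * p.2)))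
      ((P.map X).prod (P.map Y)) := by
    rw [← (indepFun_iff_map_prod_eq_prod_map_map hX.aemeasurable hY.aemeasurable).mp hindep,
      integrable_map_measure (by fun_prop) (by fun_prop)]
    exact h
  rw [← mgf_id_map hY.aemeasurable]
  simpa only [mgf, id, mul_assoc] using hprod.integral_prod_left

/-- The product of two independent non-degenerate Gaussian random variables is not
Gaussian: its law is not `N(m, v)` for any `m ∈ ℝ`, `v ≥ 0`. -/
theorem product_of_indep_gaussians_not_gaussian
    {Ω : Type*} [MeasureSpace Ω] [IsProbabilityMeasure (ℙ : Measure Ω)]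
    (Z1 Z2 : Ω → ℝ) (μ1 μ2 : ℝ) (σ1 σ2 : ℝ≥0) (hσ1 : 0 < σ1) (hσ2 : 0 < σ2)
    (hZ1 : Measurable Z1) (hZ2 : Measurable Z2)
    (hlaw1 : Measure.map Z1 ℙ = gaussianReal μ1 (σ1 ^ 2))
    (hlaw2 : Measure.map Z2 ℙ = gaussianReal μ2 (σ2 ^ 2))
    (hindep : IndepFun Z1 Z2 ℙ) :
    ∀ (m : ℝ) (v : ℝ≥0),
      Measure.map (fun ω => Z1 ω * Z2 ω) ℙ ≠ gaussianReal m v := by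
  intro m v hlaw
  set s : ℝ := (σ1 * σ2 : ℝ)⁻¹
  have hexp_prod : Integrable (fun ω => rexp (s * (Z1 ω * Z2 ω))) ℙ := by
    have := integrable_exp_mul_gaussianReal (μ := m) (v := v) s
    rwa [← hlaw, integrable_map_measure (by fun_prop) (by fun_prop)] at this
  have hmgf_Z2 : ∀ x, mgf Z2 ℙ (s * x)
      = rexp (x ^ 2 / (2 * ((σ1 ^ 2 : ℝ≥0) : ℝ)) + μ2 * s * x) := by
    intro x
    have hσ1' : (σ1 : ℝ) ≠ 0 := mod_cast hσ1.ne'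
    have hσ2' : (σ2 : ℝ) ≠ 0 := mod_cast hσ2.ne'
    rw [mgf_gaussianReal hlaw2]
    congr 1
    simp only [s, NNReal.coe_pow]
    field_simp
    ring
  have h := hindep.integrable_mgf_mul_of_integrable_exp_mul_mul hZ1 hZ2 hexp_prod
  simp only [hmgf_Z2, hlaw1] at h
  exact not_integrable_exp_sq_div_add_mul_gaussianReal μ1 _ (pow_ne_zero 2 hσ1.ne') h
end
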